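/- The Bregman divergence of the log-sum-exp function is sandwiched between the squared soft-max increment and the squared score increment: for every ε > 0 and all z, z̄ ∈ ℝⁿ, (ε/2)·‖σ_ε(z) − σ_ε(z̄)‖₂² ≤ lse_ε(z) − lse_ε(z̄) − σ_ε(z̄)ᵀ(z − z̄) ≤ (1/(2ε))·‖z − z̄‖₂². -/

import Mathlib

/-- The soft-max function with temperature `ε`. -/
noncomputable def softmax (ε : ℝ) {n : ℕ} (z : Fin n → ℝ) : Fin n → ℝ :=
  fun i => Real.exp (z i / ε) / ∑ j, Real.exp (z j / ε)

/-- The log-sum-exp function with temperature `ε`. -/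
noncomputable def lse (ε : ℝ) {n : ℕ} (z : Fin n → ℝ) : ℝ :=
  ε * Real.log (∑ j, Real.exp (z j / ε))

/-!
Along a line `t ↦ x + t • d`, log-sum-exp has second derivative `Var_p(d) / ε`, where `p` is
the soft-max at the current point. Since `0 ≤ Var_p(d) ≤ ∑ p_i d_i² ≤ ‖d‖²`, Taylor's formula makes
`lse_ε` convex with gradient `σ_ε` and `(1/ε)`-smooth, which is the upper bound. The lower bound
holds for every convex `L`-smooth function: comparing the convexity lower bound at `z̄` with the
smoothness upper bound at `z`, both evaluated at the gradient step
`u = z - L⁻¹ (∇f z - ∇f z̄)`, gives `f z - f z̄ - ⟪∇f z̄, z - z̄⟫ ≥ ‖∇f z - ∇f z̄‖² / (2L)`.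
-/

open Finset

theorem inv_two_mul_norm_sub_sq_le_of_convex_of_smooth {E : Type*} [NormedAddCommGroup E]
    [InnerProductSpace ℝ E] {f : E → ℝ} {g : E → E} {L : ℝ}
    (hL : 0 < L) (hconv : ∀ x y, f x + inner ℝ (g x) (y - x) ≤ f y)
    (hsmooth : ∀ x y, f y ≤ f x + inner ℝ (g x) (y - x) + L / 2 * ‖y - x‖ ^ 2) (x y : E) :
    (2 * L)⁻¹ * ‖g y - g x‖ ^ 2 ≤ f y - f x - inner ℝ (g x) (y - x) := by
  set u := y - L⁻¹ • (g y - g x)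
  have hlow := hconv x u
  have hup := hsmooth y u
  have hux : u - x = (y - x) - L⁻¹ • (g y - g x) := by simp only [u]; abel
  have huy : u - y = -(L⁻¹ • (g y - g x)) := by simp only [u]; abel
  rw [hux, inner_sub_right, inner_smul_right] at hlow
  rw [huy, inner_neg_right, inner_smul_right, norm_neg, norm_smul, mul_pow, Real.norm_eq_abs,
    sq_abs] at hup
  have hΔ : inner ℝ (g y) (g y - g x) - inner ℝ (g x) (g y - g x) = ‖g y - g x‖ ^ 2 := by
    rw [← inner_sub_left, real_inner_self_eq_norm_sq]
  field_simp at hlow hup ⊢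
  linarith

theorem sub_sub_mul_le_of_hasDerivAt_le {f f' f'' : ℝ → ℝ} {M x : ℝ}
    (hf : ∀ t, HasDerivAt f (f' t) t) (hf' : ∀ t, HasDerivAt f' (f'' t) t) (hM : ∀ t, f'' t ≤ M)
    (hx : 0 ≤ x) : f x - f 0 - f' 0 * x ≤ M / 2 * x ^ 2 := by
  have hslope : Antitone fun t => f' t - M * t :=
    antitone_of_hasDerivAt_nonpos (fun t => (hf' t).fun_sub ((hasDerivAt_id t).const_mul M))
      fun t => by simpa using hM t
  have hrem : ∀ t,
      HasDerivAt (fun t => f t - f' 0 * t - M / 2 * t ^ 2) (f' t - f' 0 - M * t) t := by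
    intro t
    refine (((hf t).fun_sub ((hasDerivAt_id t).const_mul (f' 0))).fun_sub
      ((hasDerivAt_pow 2 t).const_mul (M / 2))).congr_deriv ?_
    norm_num
    ring
  have hanti : AntitoneOn (fun t => f t - f' 0 * t - M / 2 * t ^ 2) (Set.Ici 0) := by
    refine antitoneOn_of_hasDerivWithinAt_nonpos (convex_Ici 0)
      (fun t _ => (hrem t).continuousAt.continuousWithinAt) (fun t _ => (hrem t).hasDerivWithinAt)
      fun t ht => ?_
    rw [interior_Ici] at ht
    have := hslope (le_of_lt ht)
    simp only at this
    linarith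
  have := hanti Set.self_mem_Ici hx hx
  simp only at this
  linarith

section Variance

variable {ι : Type*} [Fintype ι] {p : ι → ℝ}

theorem sum_mul_sub_dotProduct_mul_eq (d : ι → ℝ) :
    ∑ i, p i * (d i - p ⬝ᵥ d) * d i = ∑ i, p i * d i ^ 2 - (p ⬝ᵥ d) ^ 2 := by
  rw [pow_two (p ⬝ᵥ d), dotProduct, sum_mul, ← sum_sub_distrib]
  exact sum_congr rfl fun i _ => by ring

theorem sum_mul_sub_dotProduct_mul_nonneg (hp : ∀ i, 0 ≤ p i) (hp1 : ∑ i, p i = 1) (d : ι → ℝ) :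
    0 ≤ ∑ i, p i * (d i - p ⬝ᵥ d) * d i := by
  have hcs : (p ⬝ᵥ d) ^ 2 ≤ (∑ i, p i) * ∑ i, p i * d i ^ 2 :=
    sum_sq_le_sum_mul_sum_of_sq_le_mul _ (fun i _ => hp i)
      (fun i _ => mul_nonneg (hp i) (sq_nonneg _))
      fun i _ => le_of_eq (by ring)
  rw [hp1, one_mul] at hcs
  rw [sum_mul_sub_dotProduct_mul_eq]
  linarith

theorem sum_mul_sub_dotProduct_mul_le (hp : ∀ i, 0 ≤ p i) (hp1 : ∑ i, p i = 1) (d : ι → ℝ) :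
    ∑ i, p i * (d i - p ⬝ᵥ d) * d i ≤ ∑ i, d i ^ 2 := by
  have hp_le : ∀ i, p i ≤ 1 := fun i =>
    hp1 ▸ single_le_sum (fun j _ => hp j) (mem_univ i)
  calc ∑ i, p i * (d i - p ⬝ᵥ d) * d i ≤ ∑ i, p i * d i ^ 2 := by
        rw [sum_mul_sub_dotProduct_mul_eq]; nlinarith [sq_nonneg (p ⬝ᵥ d)]
    _ ≤ ∑ i, d i ^ 2 := sum_le_sum fun i _ => mul_le_of_le_one_left (sq_nonneg _) (hp_le i)

end Variance

section Lse

open Real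

variable {n : ℕ} {ε : ℝ}

theorem softmax_nonneg (z : Fin n → ℝ) (i : Fin n) : 0 ≤ softmax ε z i := by
  unfold softmax; positivity

theorem sum_exp_div_pos [NeZero n] (z : Fin n → ℝ) : 0 < ∑ j, exp (z j / ε) :=
  sum_pos (fun _ _ => exp_pos _) univ_nonempty

theorem sum_softmax [NeZero n] (z : Fin n → ℝ) : ∑ i, softmax ε z i = 1 := by
  simp only [softmax, ← sum_div]
  exact div_self (sum_exp_div_pos z).ne'

section AddSmul

variable (x d : Fin n → ℝ)

theorem hasDerivAt_exp_add_smul (j : Fin n) (t : ℝ) :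
    HasDerivAt (fun t => exp ((x + t • d) j / ε)) (exp ((x + t • d) j / ε) * (d j / ε)) t := by
  simp only [Pi.add_apply, Pi.smul_apply, smul_eq_mul]
  exact ((((hasDerivAt_id t).mul_const (d j)).const_add (x j)).div_const ε).exp.congr_deriv
    (by simp)

theorem hasDerivAt_sum_exp_add_smul (t : ℝ) :
    HasDerivAt (fun t => ∑ j, exp ((x + t • d) j / ε))
      (∑ j, exp ((x + t • d) j / ε) * (d j / ε)) t :=
  HasDerivAt.fun_sum fun j _ => hasDerivAt_exp_add_smul x d j t

theorem hasDerivAt_lse_add_smul [NeZero n] (hε : ε ≠ 0) (t : ℝ) :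
    HasDerivAt (fun t => lse ε (x + t • d)) (softmax ε (x + t • d) ⬝ᵥ d) t := by
  refine (((hasDerivAt_sum_exp_add_smul x d t).log (sum_exp_div_pos _).ne').const_mul
    ε).congr_deriv ?_
  simp only [softmax, dotProduct, div_mul_eq_mul_div, ← sum_div, mul_div_assoc']
  field_simp

theorem hasDerivAt_softmax_add_smul [NeZero n] (i : Fin n) (t : ℝ) :
    HasDerivAt (fun t => softmax ε (x + t • d) i)
      (softmax ε (x + t • d) i * (d i - softmax ε (x + t • d) ⬝ᵥ d) / ε) t := by
  refine ((hasDerivAt_exp_add_smul x d i t).div (hasDerivAt_sum_exp_add_smul x d t)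
    (sum_exp_div_pos _).ne').congr_deriv ?_
  simp only [softmax, dotProduct, div_mul_eq_mul_div, ← sum_div, mul_div_assoc']
  field_simp

theorem hasDerivAt_softmax_add_smul_dotProduct [NeZero n] (t : ℝ) :
    HasDerivAt (fun t => softmax ε (x + t • d) ⬝ᵥ d)
      ((∑ i, softmax ε (x + t • d) i * (d i - softmax ε (x + t • d) ⬝ᵥ d) * d i) / ε) t := by
  refine (HasDerivAt.fun_sum fun i _ =>
    (hasDerivAt_softmax_add_smul x d i t).mul_const (d i)).congr_deriv ?_
  rw [sum_div]
  exact sum_congr rfl fun i _ => by ring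

end AddSmul

theorem lse_bregman_le [NeZero n] (hε : 0 < ε) (x y : Fin n → ℝ) :
    lse ε y - lse ε x - softmax ε x ⬝ᵥ (y - x) ≤ 1 / (2 * ε) * ∑ i, (y i - x i) ^ 2 := by
  have := sub_sub_mul_le_of_hasDerivAt_le (hasDerivAt_lse_add_smul x (y - x) hε.ne')
    (hasDerivAt_softmax_add_smul_dotProduct x (y - x))
    (fun _ => div_le_div_of_nonneg_right
      (sum_mul_sub_dotProduct_mul_le (softmax_nonneg _) (sum_softmax _) _) hε.le) zero_le_one
  simp only [one_smul, zero_smul, add_zero, add_sub_cancel, mul_one, one_pow] at this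
  convert this using 1
  simp only [Pi.sub_apply]
  ring

theorem lse_bregman_nonneg [NeZero n] (hε : 0 < ε) (x y : Fin n → ℝ) :
    0 ≤ lse ε y - lse ε x - softmax ε x ⬝ᵥ (y - x) := by
  have := sub_sub_mul_le_of_hasDerivAt_le
    (fun t => (hasDerivAt_lse_add_smul x (y - x) hε.ne' t).neg)
    (fun t => (hasDerivAt_softmax_add_smul_dotProduct x (y - x) t).neg)
    (fun _ => neg_nonpos.2 <| div_nonneg
      (sum_mul_sub_dotProduct_mul_nonneg (softmax_nonneg _) (sum_softmax _) _) hε.le) zero_le_one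
  simp only [Pi.neg_apply, one_smul, zero_smul, add_zero, add_sub_cancel, zero_div, zero_mul]
    at this
  linarith

end Lse

/-- The Bregman divergence of log-sum-exp is sandwiched between the squared
soft-max increment and the squared score increment:
`(ε/2)‖σ_ε(z) − σ_ε(z̄)‖₂² ≤ lse_ε(z) − lse_ε(z̄) − σ_ε(z̄)ᵀ(z − z̄) ≤ (1/(2ε))‖z − z̄‖₂²`. -/
theorem lse_bregman_sandwich (ε : ℝ) (hε : 0 < ε) (n : ℕ) (z zbar : Fin n → ℝ) :
    ε / 2 * ∑ i, (softmax ε z i - softmax ε zbar i) ^ 2 ≤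
        lse ε z - lse ε zbar - ∑ i, softmax ε zbar i * (z i - zbar i) ∧
      lse ε z - lse ε zbar - ∑ i, softmax ε zbar i * (z i - zbar i) ≤
        1 / (2 * ε) * ∑ i, (z i - zbar i) ^ 2 := by
  cases n with
  | zero => simp [lse]
  | succ n =>
    refine ⟨?_, lse_bregman_le hε zbar z⟩
    have hinner (u : Fin (n + 1) → ℝ) (v : EuclideanSpace ℝ (Fin (n + 1))) :
        inner ℝ (WithLp.toLp 2 u) v = u ⬝ᵥ v.ofLp := by
      simp [EuclideanSpace.inner_eq_star_dotProduct, dotProduct_comm]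
    have hconvex (x y : EuclideanSpace ℝ (Fin (n + 1))) :
        lse ε x.ofLp + inner ℝ (WithLp.toLp 2 (softmax ε x.ofLp)) (y - x) ≤ lse ε y.ofLp := by
      rw [hinner, WithLp.ofLp_sub]
      linarith [lse_bregman_nonneg hε x.ofLp y.ofLp]
    have hsmooth (x y : EuclideanSpace ℝ (Fin (n + 1))) :
        lse ε y.ofLp ≤ lse ε x.ofLp + inner ℝ (WithLp.toLp 2 (softmax ε x.ofLp)) (y - x) +
          ε⁻¹ / 2 * ‖y - x‖ ^ 2 := by
      simp only [hinner, EuclideanSpace.real_norm_sq_eq, WithLp.ofLp_sub, Pi.sub_apply,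
        show ε⁻¹ / 2 = 1 / (2 * ε) by ring]
      linarith [lse_bregman_le hε x.ofLp y.ofLp]
    calc ε / 2 * ∑ i, (softmax ε z i - softmax ε zbar i) ^ 2
        = (2 * ε⁻¹)⁻¹ * ‖WithLp.toLp 2 (softmax ε z) - WithLp.toLp 2 (softmax ε zbar)‖ ^ 2 := by
          rw [EuclideanSpace.real_norm_sq_eq, mul_inv, inv_inv]
          simp only [WithLp.ofLp_sub, Pi.sub_apply]
          ring
      _ ≤ _ := inv_two_mul_norm_sub_sq_le_of_convex_of_smooth (inv_pos.2 hε) hconvex hsmooth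
          (WithLp.toLp 2 zbar) (WithLp.toLp 2 z)
      _ = _ := by rw [hinner]; rfl
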